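/- arXiv:1810.00765 — 2 statements merged into one kernel-verified Lean document; each statement's English description precedes it below -/
import Mathlib

section
/- Let A be a finite set of N points in F² (F a field with char F ≠ 2). Then either some single circle or line contains at least N^{1/2} points of A, or every point a ∈ A determines at least N^{1/2} - 1 distinct nonzero values ‖a - b‖ over b ∈ A; in either case, if ‖a-b‖ is not identically 0 on A×A, the pinned distance number Δ_pin(A) = max_{a∈A} |{‖a-b‖ : b ∈ A}| satisfies Δ_pin(A) ≥ (1/2)·N^{1/2} - 1. -/
/-!
Fix two pins `a, b ∈ A` with `‖a - b‖ ≠ 0`. Writing `w = b - a`, a point `x` on the circles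
`‖x - a‖ = r` and `‖x - b‖ = d` has `⟪x - a, w⟫` fixed by `r, d` (as `2 ≠ 0`), and by Lagrange's
identity `‖x - a‖ ‖w‖ = ⟪x - a, w⟫² + (x - a) × w²` also `((x - a) × w)²`; since `‖w‖ ≠ 0` the pair
(dot, cross) with `w` determines `x - a`, so two such circles meet in at most two points. Hence
`c ↦ (‖a - c‖, ‖b - c‖)` is at most two-to-one on `A`, and `N ≤ 2 |Δ_a| |Δ_b|` for the sets
`Δ_a`, `Δ_b` of distances seen from `a` and `b`; so one of the two pins sees at least `√(N / 2)`. If instead some pin `a` sees fewer than `√N` distances, the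
pigeonhole principle puts at least `√N` points of `A` on one circle centred at `a`.
-/

open scoped Classical

noncomputable section

/-- The standard quadratic form on `F × F`. -/
def nrm {F : Type*} [Field F] (v : F × F) : F := v.1 ^ 2 + v.2 ^ 2

/-- `Γ` is a line in `F²`. -/
def IsLine {F : Type*} [Field F] (Γ : Set (F × F)) : Prop :=
  ∃ p v : F × F, v ≠ 0 ∧ Γ = {x | ∃ t : F, x = p + t • v}

/-- `Γ` is a circle in `F²` (with some center and radius-square). -/
def IsCircle {F : Type*} [Field F] (Γ : Set (F × F)) : Prop :=
  ∃ (p : F × F) (r : F), Γ = {x | nrm (x - p) = r}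

section PinnedDistances

variable {F : Type*} [Field F]

def dot (x w : F × F) : F := x.1 * w.1 + x.2 * w.2

def cross (x w : F × F) : F := x.1 * w.2 - x.2 * w.1

def pinnedDists (A : Finset (F × F)) (a : F × F) : Finset F := A.image fun b => nrm (a - b)

lemma nrm_sub_comm (a b : F × F) : nrm (a - b) = nrm (b - a) := by
  simp only [nrm, Prod.fst_sub, Prod.snd_sub]; ring

lemma nrm_mul_nrm (x w : F × F) : nrm x * nrm w = dot x w ^ 2 + cross x w ^ 2 := by
  simp only [nrm, dot, cross]; ring

lemma eq_of_dot_eq_of_cross_eq {x y w : F × F} (hw : nrm w ≠ 0)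
    (hdot : dot x w = dot y w) (hcross : cross x w = cross y w) : x = y := by
  simp only [nrm, dot, cross] at hw hdot hcross
  ext
  · refine mul_right_cancel₀ hw ?_
    linear_combination w.1 * hdot + w.2 * hcross
  · refine mul_right_cancel₀ hw ?_
    linear_combination w.2 * hdot - w.1 * hcross

lemma dot_eq_of_nrm_sub_eq (two : (2 : F) ≠ 0) {p q x y : F × F}
    (hp : nrm (p - x) = nrm (p - y)) (hq : nrm (q - x) = nrm (q - y)) :
    dot (x - p) (q - p) = dot (y - p) (q - p) := by
  simp only [nrm, dot, Prod.fst_sub, Prod.snd_sub] at hp hq ⊢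
  refine mul_left_cancel₀ two ?_
  linear_combination hp - hq

lemma cross_sq_eq_of_nrm_sub_eq (two : (2 : F) ≠ 0) {p q x y : F × F}
    (hp : nrm (p - x) = nrm (p - y)) (hq : nrm (q - x) = nrm (q - y)) :
    cross (x - p) (q - p) ^ 2 = cross (y - p) (q - p) ^ 2 := by
  have hx := nrm_mul_nrm (x - p) (q - p)
  have hy := nrm_mul_nrm (y - p) (q - p)
  rw [nrm_sub_comm x, hp, dot_eq_of_nrm_sub_eq two hp hq] at hx
  rw [nrm_sub_comm y] at hy
  linear_combination hy - hx

lemma eq_or_eq_or_eq_of_mem_two_circles (two : (2 : F) ≠ 0) {p q x y z : F × F} {r d : F}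
    (hpq : nrm (q - p) ≠ 0) (hx : nrm (p - x) = r ∧ nrm (q - x) = d)
    (hy : nrm (p - y) = r ∧ nrm (q - y) = d) (hz : nrm (p - z) = r ∧ nrm (q - z) = d) :
    x = y ∨ x = z ∨ y = z := by
  have eq_of_cross_eq {u v : F × F} (hu : nrm (p - u) = r ∧ nrm (q - u) = d)
      (hv : nrm (p - v) = r ∧ nrm (q - v) = d)
      (h : cross (u - p) (q - p) = cross (v - p) (q - p)) : u = v :=
    sub_left_inj.mp <| eq_of_dot_eq_of_cross_eq hpq
      (dot_eq_of_nrm_sub_eq two (hu.1.trans hv.1.symm) (hu.2.trans hv.2.symm)) h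
  have cross_sq {u v : F × F} (hu : nrm (p - u) = r ∧ nrm (q - u) = d)
      (hv : nrm (p - v) = r ∧ nrm (q - v) = d) :=
    sq_eq_sq_iff_eq_or_eq_neg.mp <|
      cross_sq_eq_of_nrm_sub_eq two (hu.1.trans hv.1.symm) (hu.2.trans hv.2.symm)
  rcases cross_sq hx hy with h | hxy
  · exact .inl (eq_of_cross_eq hx hy h)
  rcases cross_sq hx hz with h | hxz
  · exact .inr (.inl (eq_of_cross_eq hx hz h))
  exact .inr (.inr (eq_of_cross_eq hy hz (by rw [← neg_inj, ← hxy, ← hxz])))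

lemma card_le_two_mul_card_pinnedDists_mul (two : (2 : F) ≠ 0) (A : Finset (F × F))
    {p q : F × F} (hpq : nrm (q - p) ≠ 0) :
    A.card ≤ 2 * ((pinnedDists A p).card * (pinnedDists A q).card) := by
  set φ : F × F → F × F := fun c => (nrm (p - c), nrm (q - c))
  have hfiber : ∀ rd ∈ A.image φ, (A.filter fun c => φ c = rd).card ≤ 2 := by
    intro rd _
    by_contra! hgt
    obtain ⟨x, hx, y, hy, z, hz, hxy, hxz, hyz⟩ := Finset.two_lt_card.mp hgt
    simp only [Finset.mem_filter, φ, Prod.ext_iff] at hx hy hz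
    rcases eq_or_eq_or_eq_of_mem_two_circles two hpq hx.2 hy.2 hz.2 with h | h | h
    exacts [hxy h, hxz h, hyz h]
  have himage : A.image φ ⊆ pinnedDists A p ×ˢ pinnedDists A q := by
    intro rd hrd
    obtain ⟨c, hc, rfl⟩ := Finset.mem_image.mp hrd
    exact Finset.mem_product.mpr ⟨Finset.mem_image_of_mem _ hc, Finset.mem_image_of_mem _ hc⟩
  calc A.card ≤ 2 * (A.image φ).card := Finset.card_le_mul_card_image A 2 hfiber
    _ ≤ 2 * ((pinnedDists A p).card * (pinnedDists A q).card) := by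
      rw [← Finset.card_product]
      exact Nat.mul_le_mul_left 2 (Finset.card_le_card himage)

lemma exists_le_card_filter_nrm_sub_eq {A : Finset (F × F)} {a : F × F} (ha : a ∈ A) {b : ℝ}
    (hb : (pinnedDists A a).card * b ≤ A.card) :
    ∃ r : F, b ≤ (A.filter fun x => nrm (x - a) = r).card := by
  obtain ⟨r, -, hr⟩ := Finset.exists_le_card_fiber_of_nsmul_le_card_of_maps_to
    (fun c hc => Finset.mem_image_of_mem (fun c => nrm (a - c)) hc)
    ⟨_, Finset.mem_image_of_mem _ ha⟩ (b := b) (by rwa [nsmul_eq_mul])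
  refine ⟨r, ?_⟩
  simpa only [nrm_sub_comm a] using hr

lemma card_erase_zero_pinnedDists_add_one {A : Finset (F × F)} {a : F × F} (ha : a ∈ A) :
    ((pinnedDists A a).erase 0).card + 1 = (pinnedDists A a).card := by
  refine Finset.card_erase_add_one (Finset.mem_image.mpr ⟨a, ha, ?_⟩)
  simp [nrm]

end PinnedDistances

/-- either some line or circle contains at least `√N` points of `A`,
or every pin `a ∈ A` determines at least `√N - 1` distinct nonzero distances; in
either case, if the distance is not identically zero on `A × A`, some pin
determines at least `√N / 2 - 1` distances. -/
theorem stmt_6 {F : Type*} [Field F] (hchar : (2 : F) ≠ 0)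
    (A : Finset (F × F)) (N : ℕ) (hN : A.card = N) :
    ((∃ Γ : Set (F × F), (IsLine Γ ∨ IsCircle Γ) ∧
        Real.sqrt N ≤ (A.filter (· ∈ Γ)).card) ∨
      (∀ a ∈ A, Real.sqrt N - 1 ≤
        (((A.image (fun b => nrm (a - b))).erase 0).card : ℝ))) ∧
    ((∃ a ∈ A, ∃ b ∈ A, nrm (a - b) ≠ 0) →
      ∃ a ∈ A, Real.sqrt N / 2 - 1 ≤ ((A.image (fun b => nrm (a - b))).card : ℝ)) := by
  have hsqrt : Real.sqrt N * Real.sqrt N = N := Real.mul_self_sqrt N.cast_nonneg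
  refine ⟨?_, fun ⟨a, ha, b, hb, hab⟩ => ?_⟩
  · refine or_iff_not_imp_right.mpr fun hpin => ?_
    simp only [not_forall, not_le] at hpin
    obtain ⟨a, ha, hfew⟩ := hpin
    have hcard : ((pinnedDists A a).card : ℝ) < Real.sqrt N := by
      rw [← card_erase_zero_pinnedDists_add_one ha]
      push_cast
      exact lt_tsub_iff_right.mp hfew
    obtain ⟨r, hr⟩ := exists_le_card_filter_nrm_sub_eq ha (b := Real.sqrt N) (by
      rw [hN]
      nlinarith)
    exact ⟨_, .inr ⟨a, r, rfl⟩, hr⟩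
  · have hprod : (N : ℝ) ≤ 2 * ((pinnedDists A a).card * (pinnedDists A b).card) := by
      exact_mod_cast hN ▸ card_le_two_mul_card_pinnedDists_mul hchar A (nrm_sub_comm a b ▸ hab)
    by_contra! hfew
    have hfew_a : ((pinnedDists A a).card : ℝ) < Real.sqrt N / 2 - 1 := hfew a ha
    have hfew_b : ((pinnedDists A b).card : ℝ) < Real.sqrt N / 2 - 1 := hfew b hb
    nlinarith [Nat.cast_nonneg (α := ℝ) (pinnedDists A a).card,
      Nat.cast_nonneg (α := ℝ) (pinnedDists A b).card]
end
end

section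
/- Let A be a finite set of N points in F² (F a field with char F ≠ 2) such that at most M points of A lie on any isotropic line, where 2M + 1 < N. Let T = |{(a,b,c) ∈ A³ : ‖a-b‖ = ‖a-c‖ ≠ 0}| and let Δ_pin(A) = max_{a∈A} |{r ∈ F\{0} : ∃ b ∈ A, ‖a-b‖ = r}|. Then Δ_pin(A) · T ≥ N(N - 2M - 1)². -/
open scoped Classical

noncomputable section

/-- `Γ` is isotropic: all pairwise distances between its points vanish. -/
def IsIsotropic {F : Type*} [Field F] (Γ : Set (F × F)) : Prop :=
  ∀ p ∈ Γ, ∀ q ∈ Γ, nrm (p - q) = 0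


/-!
Fix a pin `a ∈ A` and group the points `b` with `‖a - b‖ ≠ 0` by the value of `‖a - b‖`. The
isotropic lines through `a` carry every `b` with `‖a - b‖ = 0`, and there are at most two of them,
so at least `N - 2M - 1` points remain. Cauchy–Schwarz over the at most `Δ_pin(A)` nonzero values
bounds the square of that number by `Δ_pin(A)` times the number of pairs `(b, c)` with
`‖a - b‖ = ‖a - c‖ ≠ 0`; summing over the pin `a` gives `T`.
-/

open Finset

namespace Finset

variable {α β : Type*} [DecidableEq β]

lemma card_filter_apply_eq_apply_eq_sum_sq (s : Finset α) (f : α → β) :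
    #{p ∈ s ×ˢ s | f p.1 = f p.2} = ∑ b ∈ s.image f, #{a ∈ s | f a = b} ^ 2 := by
  rw [card_eq_sum_card_fiberwise (f := fun p => f p.1) (t := s.image f)]
  · refine sum_congr rfl fun b _ => ?_
    rw [sq, ← card_product]
    congr 1
    ext ⟨x, y⟩
    simp only [mem_filter, mem_product]
    grind
  · intro p hp
    rw [mem_coe, mem_filter, mem_product] at hp
    exact mem_image_of_mem f hp.1.1

lemma sq_card_le_card_image_mul_card_filter_apply_eq_apply (s : Finset α) (f : α → β) :
    #s ^ 2 ≤ #(s.image f) * #{p ∈ s ×ˢ s | f p.1 = f p.2} := by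
  rw [card_filter_apply_eq_apply_eq_sum_sq, card_eq_sum_card_image f s]
  exact sq_sum_le_card_mul_sum_sq

end Finset

section Plane

variable {F : Type*} [Field F]

lemma nrm_smul (t : F) (v : F × F) : nrm (t • v) = t ^ 2 * nrm v := by
  simp only [nrm, Prod.smul_fst, Prod.smul_snd, smul_eq_mul]
  ring

lemma isLine_setOf_add_smul (a : F × F) {v : F × F} (hv : v ≠ 0) :
    IsLine {x | ∃ t : F, x = a + t • v} :=
  ⟨a, v, hv, rfl⟩

lemma isIsotropic_setOf_add_smul (a : F × F) {v : F × F} (hv : nrm v = 0) :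
    IsIsotropic {x | ∃ t : F, x = a + t • v} := by
  rintro _ ⟨t, rfl⟩ _ ⟨s, rfl⟩
  rw [add_sub_add_left_eq_sub, ← sub_smul, nrm_smul, hv, mul_zero]

lemma eq_zero_of_nrm_eq_zero (h : ∀ i : F, i ^ 2 ≠ -1) {v : F × F} (hv : nrm v = 0) :
    v = 0 := by
  unfold nrm at hv
  have h2 : v.2 = 0 := by
    by_contra hne
    apply h (v.1 / v.2)
    field_simp
    linear_combination hv
  have h1 : v.1 = 0 := by simpa [h2] using hv
  exact Prod.ext h1 h2

lemma exists_eq_smul_of_nrm_eq_zero {i : F} (hi : i ^ 2 = -1) {v : F × F} (hv : nrm v = 0) :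
    ∃ t : F, v = t • (i, 1) ∨ v = t • (-i, 1) := by
  unfold nrm at hv
  have hfac : (v.1 - v.2 * i) * (v.1 - v.2 * -i) = 0 := by
    linear_combination hv - v.2 ^ 2 * hi
  refine ⟨v.2, ?_⟩
  rcases mul_eq_zero.mp hfac with h | h
  · exact .inl (Prod.ext (by simpa using sub_eq_zero.mp h) (by simp))
  · exact .inr (Prod.ext (by simpa using sub_eq_zero.mp h) (by simp))

def pinDistances (A : Finset (F × F)) (a : F × F) : Finset F :=
  (A.image fun b => nrm (a - b)).erase 0

def isoscelesPairs (A : Finset (F × F)) (a : F × F) : Finset ((F × F) × (F × F)) :=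
  {q ∈ A ×ˢ A | nrm (a - q.1) = nrm (a - q.2) ∧ nrm (a - q.1) ≠ 0}

lemma card_filter_isosceles_eq_sum_card_isoscelesPairs (A : Finset (F × F)) :
    #{p ∈ A ×ˢ A ×ˢ A | nrm (p.1 - p.2.1) = nrm (p.1 - p.2.2) ∧ nrm (p.1 - p.2.1) ≠ 0} =
      ∑ a ∈ A, #(isoscelesPairs A a) := by
  simp only [isoscelesPairs, card_filter, sum_product]

section PointSet

variable {A : Finset (F × F)} {M : ℕ}
  (hiso : ∀ Γ : Set (F × F), IsLine Γ → IsIsotropic Γ → (A.filter (· ∈ Γ)).card ≤ M)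
include hiso

lemma card_filter_nrm_sub_eq_zero_le (a : F × F) :
    #{b ∈ A | nrm (a - b) = 0} ≤ 2 * M + 1 := by
  by_cases h : ∃ i : F, i ^ 2 = -1
  · obtain ⟨i, hi⟩ := h
    let L : F × F → Set (F × F) := fun v => {x | ∃ t : F, x = a + t • v}
    have hL : ∀ v : F × F, v.2 = 1 → nrm v = 0 → #{b ∈ A | b ∈ L v} ≤ M := fun v h1 h0 =>
      hiso _ (isLine_setOf_add_smul a fun hv => by simp [hv] at h1)
        (isIsotropic_setOf_add_smul a h0)
    have hsub : {b ∈ A | nrm (a - b) = 0} ⊆ {b ∈ A | b ∈ L (i, 1)} ∪ {b ∈ A | b ∈ L (-i, 1)} := by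
      intro b hb
      rw [mem_filter] at hb
      obtain ⟨t, ht | ht⟩ := exists_eq_smul_of_nrm_eq_zero hi hb.2
      · exact mem_union_left _ (mem_filter.mpr ⟨hb.1, -t, by rw [neg_smul, ← ht]; abel⟩)
      · exact mem_union_right _ (mem_filter.mpr ⟨hb.1, -t, by rw [neg_smul, ← ht]; abel⟩)
    have hn : nrm ((i, 1) : F × F) = 0 ∧ nrm ((-i, 1) : F × F) = 0 := by
      constructor <;> simp only [nrm] <;> linear_combination hi
    calc #{b ∈ A | nrm (a - b) = 0}
        ≤ #{b ∈ A | b ∈ L (i, 1)} + #{b ∈ A | b ∈ L (-i, 1)} :=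
          (card_le_card hsub).trans (card_union_le _ _)
      _ ≤ 2 * M + 1 := by linarith [hL _ rfl hn.1, hL _ rfl hn.2]
  · have hsub : {b ∈ A | nrm (a - b) = 0} ⊆ {a} := fun b hb => by
      have := eq_zero_of_nrm_eq_zero (by simpa using h) (mem_filter.mp hb).2
      simp [sub_eq_zero.mp this]
    exact (card_le_card hsub).trans (by simp)

lemma sq_card_sub_le_card_pinDistances_mul_card_isoscelesPairs (a : F × F) :
    (#A - 2 * M - 1) ^ 2 ≤ #(pinDistances A a) * #(isoscelesPairs A a) := by
  unfold pinDistances isoscelesPairs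
  set f : F × F → F := fun b => nrm (a - b)
  set S := {b ∈ A | f b ≠ 0}
  have hS : #A - 2 * M - 1 ≤ #S := by
    have hsplit : #{b ∈ A | f b = 0} + #S = #A := card_filter_add_card_filter_not _
    have hnull : #{b ∈ A | f b = 0} ≤ 2 * M + 1 := card_filter_nrm_sub_eq_zero_le hiso a
    omega
  have himage : S.image f ⊆ (A.image f).erase 0 := by
    intro r hr
    obtain ⟨b, hb, rfl⟩ := mem_image.mp hr
    rw [mem_filter] at hb
    exact mem_erase.mpr ⟨hb.2, mem_image_of_mem f hb.1⟩
  have hpairs : {q ∈ S ×ˢ S | f q.1 = f q.2} =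
      {q ∈ A ×ˢ A | f q.1 = f q.2 ∧ f q.1 ≠ 0} := by
    ext q
    simp only [S, mem_filter, mem_product]
    grind
  calc (#A - 2 * M - 1) ^ 2 ≤ #S ^ 2 := Nat.pow_le_pow_left hS 2
    _ ≤ #(S.image f) * #{q ∈ S ×ˢ S | f q.1 = f q.2} :=
      sq_card_le_card_image_mul_card_filter_apply_eq_apply S f
    _ ≤ _ := by
      rw [hpairs]
      gcongr

end PointSet

end Plane

theorem stmt_8_general {F : Type*} [Field F]
    (A : Finset (F × F)) (N M : ℕ) (hN : A.card = N)
    (hiso : ∀ Γ : Set (F × F), IsLine Γ → IsIsotropic Γ →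
      (A.filter (· ∈ Γ)).card ≤ M)
    (T : ℕ)
    (hT : T = ((A ×ˢ A ×ˢ A).filter (fun p =>
        nrm (p.1 - p.2.1) = nrm (p.1 - p.2.2) ∧ nrm (p.1 - p.2.1) ≠ 0)).card)
    (Dpin : ℕ)
    (hD : Dpin = A.sup fun a => ((A.image fun b => nrm (a - b)).erase 0).card) :
    N * (N - 2 * M - 1) ^ 2 ≤ Dpin * T := by
  subst hN hT hD
  rw [card_filter_isosceles_eq_sum_card_isoscelesPairs, mul_sum, ← smul_eq_mul, ← sum_const]
  exact sum_le_sum fun a ha =>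
    (sq_card_sub_le_card_pinDistances_mul_card_isoscelesPairs hiso a).trans
      (Nat.mul_le_mul_right _ (le_sup (f := fun a => #(pinDistances A a)) ha))

/-- if at most `M` points of `A` lie on any isotropic line and
`2M + 1 < N`, then `Δ_pin(A) · T ≥ N (N - 2M - 1)²`. -/
theorem stmt_8 {F : Type*} [Field F] (hchar : (2 : F) ≠ 0)
    (A : Finset (F × F)) (N M : ℕ) (hN : A.card = N) (hM : 2 * M + 1 < N)
    (hiso : ∀ Γ : Set (F × F), IsLine Γ → IsIsotropic Γ →
      (A.filter (· ∈ Γ)).card ≤ M)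
    (T : ℕ)
    (hT : T = ((A ×ˢ A ×ˢ A).filter (fun p =>
        nrm (p.1 - p.2.1) = nrm (p.1 - p.2.2) ∧ nrm (p.1 - p.2.1) ≠ 0)).card)
    (Dpin : ℕ)
    (hD : Dpin = A.sup fun a => ((A.image fun b => nrm (a - b)).erase 0).card) :
    N * (N - 2 * M - 1) ^ 2 ≤ Dpin * T :=
  stmt_8_general A N M hN hiso T hT Dpin hD
end
end
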